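/- Let N ∈ ℕ, let L : ℂ^N → ℂ^N be a Hermitian (self-adjoint) linear map, β ∈ ℝ, C₀ > 0 and ρ(ψ) = √(Σ_j |ψ_j|⁴ + C₀). Let ψ : ℝ → ℂ^N be differentiable and q : ℝ → ℝ be any function such that for all t, ψ'(t) = −i • (L (ψ t) + (β q t / ρ(ψ t)) • (|ψ t|²(ψ t))). Then the mass t ↦ ⟨ψ t, ψ t⟩ is constant in t. -/

import Mathlib

open Finset Complex

/-- The componentwise cubic nonlinearity `|ψ|²ψ`. -/
noncomputable def nlVec {N : ℕ} (ψ : EuclideanSpace ℂ (Fin N)) : EuclideanSpace ℂ (Fin N) :=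
  WithLp.toLp 2 (fun j => (‖ψ j‖ : ℂ) ^ 2 * ψ j)

/-- The inner product `⟨x, y⟩ = ∑ j, x j * conj (y j)` of the paper. -/
noncomputable def pInner {N : ℕ} (x y : EuclideanSpace ℂ (Fin N)) : ℂ :=
  ∑ j, x j * (starRingEnd ℂ) (y j)

/-- The SAV denominator `ρ(ψ) = √(∑ j |ψ j|⁴ + C₀)`. -/
noncomputable def savRho {N : ℕ} (C₀ : ℝ) (ψ : EuclideanSpace ℂ (Fin N)) : ℝ :=
  Real.sqrt ((∑ j, ‖ψ j‖ ^ 4) + C₀)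

/-!
Along `ψ' = -i H(ψ)` one has `d/dt ⟨ψ, ψ⟩ = 2 Im ⟨ψ, H(ψ)⟩`. For the SAV right-hand side
`H(ψ) = L ψ + c |ψ|²ψ` with `c` real, `⟨ψ, L ψ⟩` is real because `L` is Hermitian and
`⟨ψ, |ψ|²ψ⟩ = ∑ |ψ_j|⁴` is real, so the mass has zero derivative and is constant.
-/

open scoped InnerProductSpace

section NormConservation

variable {E : Type*} [NormedAddCommGroup E] [InnerProductSpace ℂ E]

theorem hasDerivAt_inner_self_of_hasDerivAt_neg_I_smul {ψ : ℝ → E} {v : E} {t : ℝ}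
    (hψ : HasDerivAt ψ (-I • v) t) :
    HasDerivAt (fun s => ⟪ψ s, ψ s⟫_ℂ) (2 * (⟪ψ t, v⟫_ℂ).im) t := by
  refine (hψ.inner ℂ hψ).congr_deriv ?_
  rw [inner_smul_left, inner_smul_right, ← inner_conj_symm v (ψ t)]
  generalize ⟪ψ t, v⟫_ℂ = z
  apply Complex.ext
  · simp; ring
  · simp

theorem inner_self_eq_of_deriv_eq_neg_I_smul {ψ v : ℝ → E} (hψ : Differentiable ℝ ψ)
    (hode : ∀ t, deriv ψ t = -I • v t) (hv : ∀ t, (⟪ψ t, v t⟫_ℂ).im = 0) (t₁ t₂ : ℝ) :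
    ⟪ψ t₁, ψ t₁⟫_ℂ = ⟪ψ t₂, ψ t₂⟫_ℂ := by
  have hderiv : ∀ t, HasDerivAt (fun s => ⟪ψ s, ψ s⟫_ℂ) 0 t := fun t => by
    have h := hasDerivAt_inner_self_of_hasDerivAt_neg_I_smul (hode t ▸ (hψ t).hasDerivAt)
    rwa [hv t, ofReal_zero, mul_zero] at h
  exact is_const_of_deriv_eq_zero (fun t => (hderiv t).differentiableAt)
    (fun t => (hderiv t).deriv) t₁ t₂

end NormConservation

section SAV

variable {N : ℕ}

theorem pInner_eq_inner (x y : EuclideanSpace ℂ (Fin N)) : pInner x y = ⟪y, x⟫_ℂ := by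
  simp [pInner, PiLp.inner_apply]

theorem isSymmetric_of_pInner {L : EuclideanSpace ℂ (Fin N) →ₗ[ℂ] EuclideanSpace ℂ (Fin N)}
    (hL : ∀ x y, pInner (L x) y = pInner x (L y)) : L.IsSymmetric := fun x y => by
  simpa only [pInner_eq_inner] using (hL y x).symm

theorem inner_self_nlVec (x : EuclideanSpace ℂ (Fin N)) :
    ⟪x, nlVec x⟫_ℂ = ((∑ j, ‖x j‖ ^ 4 : ℝ) : ℂ) := by
  rw [PiLp.inner_apply]
  push_cast
  refine Finset.sum_congr rfl fun j _ => ?_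
  simp only [RCLike.inner_apply, nlVec]
  rw [mul_assoc, Complex.mul_conj']
  norm_cast
  ring

theorem im_inner_self_ofReal_smul_nlVec (c : ℝ) (x : EuclideanSpace ℂ (Fin N)) :
    (⟪x, (c : ℂ) • nlVec x⟫_ℂ).im = 0 := by
  rw [inner_smul_right, inner_self_nlVec, ← ofReal_mul, ofReal_im]

end SAV

theorem SAV_mass_conservation_general {N : ℕ}
    (L : EuclideanSpace ℂ (Fin N) →ₗ[ℂ] EuclideanSpace ℂ (Fin N))
    (hL : ∀ x y, pInner (L x) y = pInner x (L y))
    (β : ℝ) (C₀ : ℝ)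
    (ψ : ℝ → EuclideanSpace ℂ (Fin N)) (q : ℝ → ℝ)
    (hψ : Differentiable ℝ ψ)
    (hode : ∀ t, deriv ψ t = (-Complex.I) •
        (L (ψ t) + ((β * q t / savRho C₀ (ψ t) : ℝ) : ℂ) • nlVec (ψ t))) :
    ∀ t₁ t₂ : ℝ, pInner (ψ t₁) (ψ t₁) = pInner (ψ t₂) (ψ t₂) := by
  intro t₁ t₂
  simp only [pInner_eq_inner]
  refine inner_self_eq_of_deriv_eq_neg_I_smul hψ hode (fun t => ?_) t₁ t₂
  rw [inner_add_right, add_im, im_inner_self_ofReal_smul_nlVec, add_zero]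
  exact (isSymmetric_of_pInner hL).im_inner_self_apply (ψ t)

/-- Mass conservation law of the SAV reformulated system (7): along any solution of the
first SAV equation, the mass `⟨ψ(t), ψ(t)⟩` is constant in `t`. -/
theorem SAV_mass_conservation {N : ℕ}
    (L : EuclideanSpace ℂ (Fin N) →ₗ[ℂ] EuclideanSpace ℂ (Fin N))
    (hL : ∀ x y, pInner (L x) y = pInner x (L y))
    (β : ℝ) (C₀ : ℝ) (hC₀ : 0 < C₀)
    (ψ : ℝ → EuclideanSpace ℂ (Fin N)) (q : ℝ → ℝ)
    (hψ : Differentiable ℝ ψ)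
    (hode : ∀ t, deriv ψ t = (-Complex.I) •
        (L (ψ t) + ((β * q t / savRho C₀ (ψ t) : ℝ) : ℂ) • nlVec (ψ t))) :
    ∀ t₁ t₂ : ℝ, pInner (ψ t₁) (ψ t₁) = pInner (ψ t₂) (ψ t₂) :=
  SAV_mass_conservation_general L hL β C₀ ψ q hψ hode
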